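/- Let 𝔫 be the 5-dimensional real Lie algebra l₅,₇ (case B) with orthonormal basis {E₁,…,E₅} and non-zero brackets [E₁,E₂] = m·E₃ + s·E₄ + u·E₅, [E₁,E₃] = v·E₄ + w·E₅, [E₁,E₄] = x·E₅, where m, v, x > 0, s > 0 and u, w ∈ ℝ. Then there exist no c ∈ ℝ and no derivation D of 𝔫 with Ric = c·Id + D; i.e. 𝔫 is never an algebraic Ricci soliton. -/

import Mathlib

/-! A nilsoliton derivation `D = Ric - c·Id` maps the derived algebra `span{E₃, E₄, E₅}` into
itself, so `⟨Ric Y, E₂⟩ = 0` for every bracket `Y`. Applied to `[E₁,E₃]` this gives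
`u·v·x = 0`, hence `u = 0`; applied to `[E₁,E₂]` it then gives `m·s·v = 0`, impossible. -/

open scoped BigOperators

namespace Nilsoliton7

noncomputable section

abbrev V : Type := Fin 5 → ℝ

/-- The orthonormal basis vectors E₁,…,E₅ (indexed 0,…,4). -/
def E (i : Fin 5) : V := Pi.single i 1

/-- The inner product making `E` an orthonormal basis. -/
def ip (x y : V) : ℝ := ∑ i, x i * y i

/-- `D` is a derivation of the bracket `br`. -/
def IsDerivation (br : V → V → V) (D : V →ₗ[ℝ] V) : Prop :=
  ∀ X Y : V, D (br X Y) = br (D X) Y + br X (D Y)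

/-- `Ric` is the Ricci operator of the nilpotent Lie group with left-invariant
metric determined by the bracket `br` and the orthonormal basis `E`. -/
def IsRicci (br : V → V → V) (Ric : V →ₗ[ℝ] V) : Prop :=
  ∀ X Y : V, ip (Ric X) Y =
      -(1/2) * (∑ i : Fin 5, ip (br X (E i)) (br Y (E i)))
      + (1/4) * (∑ i : Fin 5, ∑ j : Fin 5, ip (br (E i) (E j)) X * ip (br (E i) (E j)) Y)

/-- The bracket of l₅,₇ (case B): [E₁,E₂] = m·E₃ + s·E₄ + u·E₅,
[E₁,E₃] = v·E₄ + w·E₅, [E₁,E₄] = x·E₅. -/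
def br (m s u v w x : ℝ) (X Y : V) : V :=
  (m * (X 0 * Y 1 - X 1 * Y 0)) • E 2 + (s * (X 0 * Y 1 - X 1 * Y 0) + v * (X 0 * Y 2 - X 2 * Y 0)) • E 3 + (u * (X 0 * Y 1 - X 1 * Y 0) + w * (X 0 * Y 2 - X 2 * Y 0) + x * (X 0 * Y 3 - X 3 * Y 0)) • E 4

lemma ip_E (X : V) (i : Fin 5) : ip X (E i) = X i := by
  simp [ip, E, Pi.single_apply]

lemma apply_bracket_eq_zero_of_eq_smul_id_add_derivation {b : V → V → V} {Ric D : V →ₗ[ℝ] V}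
    {c : ℝ} {i : Fin 5} (hb : ∀ X Y, b X Y i = 0) (hD : IsDerivation b D)
    (hRic : Ric = c • LinearMap.id + D) (X Y : V) : Ric (b X Y) i = 0 := by
  subst hRic
  simp [hD X Y, hb]

section

variable {m s u v w x : ℝ}

lemma br_apply_one (X Y : V) : br m s u v w x X Y 1 = 0 := by
  simp [br, E]

lemma br_E0_E1 : br m s u v w x (E 0) (E 1) = m • E 2 + s • E 3 + u • E 4 := by
  simp [br, E]

lemma br_E0_E2 : br m s u v w x (E 0) (E 2) = v • E 3 + w • E 4 := by
  simp [br, E]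

variable {Ric : V →ₗ[ℝ] V} (hRic : IsRicci (br m s u v w x) Ric)
include hRic

lemma ricci_E2_one : Ric (E 2) 1 = -(s * v + u * w) / 2 := by
  rw [← ip_E (Ric (E 2)) 1, hRic]
  simp [ip, E, br, Fin.sum_univ_five, Pi.single_apply]
  ring

lemma ricci_E3_one : Ric (E 3) 1 = -(u * x) / 2 := by
  rw [← ip_E (Ric (E 3)) 1, hRic]
  simp [ip, E, br, Fin.sum_univ_five, Pi.single_apply]
  ring

lemma ricci_E4_one : Ric (E 4) 1 = 0 := by
  rw [← ip_E (Ric (E 4)) 1, hRic]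
  simp [ip, E, br, Pi.single_apply]

end

theorem stmt7 (m s u v w x : ℝ) (hm : 0 < m) (hv : 0 < v) (hx : 0 < x) (hs : 0 < s)
    (Ric : V →ₗ[ℝ] V) (hRic : IsRicci (br m s u v w x) Ric) :
    ¬ ∃ (c : ℝ) (D : V →ₗ[ℝ] V), IsDerivation (br m s u v w x) D ∧
        Ric = c • (LinearMap.id : V →ₗ[ℝ] V) + D := by
  rintro ⟨c, D, hDer, hEq⟩
  have hbr := apply_bracket_eq_zero_of_eq_smul_id_add_derivation br_apply_one hDer hEq (E 0)
  have h02 := hbr (E 2)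
  have h01 := hbr (E 1)
  simp only [br_E0_E2, br_E0_E1, map_add, map_smul, Pi.add_apply, Pi.smul_apply, smul_eq_mul,
    ricci_E2_one hRic, ricci_E3_one hRic, ricci_E4_one hRic] at h02 h01
  have hu : u = 0 := by
    have huvx : u * (v * x) = 0 := by linear_combination -2 * h02
    simpa [(mul_pos hv hx).ne'] using huvx
  subst hu
  have hmsv : m * s * v = 0 := by linear_combination -2 * h01
  exact (mul_pos (mul_pos hm hs) hv).ne' hmsv

end

end Nilsoliton7
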